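/- arXiv:1906.03443 — 5 statements merged into one kernel-verified Lean document; each statement's English description precedes it below -/
import Mathlib

section
/- For the Cantor distribution, the value of the mean residual life function at x = 1/3 is m(1/3) = 1/2, i.e., (1/(1-F(1/3))) ∫_{1/3}^1 (1-F(u)) du = 1/2. -/
open MeasureTheory Set Filter

/-- The CDF of the Cantor distribution: the monotone function on [0,1] with
F(0)=0, F(1)=1 satisfying the two self-similarity relations
F(x/3) = F(x)/2 and F((x+2)/3) = 1/2 + F(x)/2. -/
def IsCantorCDF (F : ℝ → ℝ) : Prop :=
  Monotone F ∧ F 0 = 0 ∧ F 1 = 1 ∧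
    (∀ x ∈ Set.Icc (0:ℝ) 1, F (x/3) = F x / 2) ∧
    (∀ x ∈ Set.Icc (0:ℝ) 1, F ((x+2)/3) = 1/2 + F x / 2)

/-- The mean residual life function of a distribution with CDF F supported on [0,1]:
m(x) = (1/(1-F(x))) ∫_x^1 (1-F(u)) du  (equal to 0 at x = 1 by convention). -/
noncomputable def mrl (F : ℝ → ℝ) (x : ℝ) : ℝ :=
  (∫ u in x..(1:ℝ), (1 - F u)) / (1 - F x)

/-- For the Cantor distribution, m(1/3) = 1/2. -/
theorem cantor_mrl_at_third (F : ℝ → ℝ) (hF : IsCantorCDF F) :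
    mrl F (1/3) = 1 / 2 := by
  obtain ⟨mono, F0, F1, h1, h2⟩ := hF
  have hthird : F (1/3) = 1/2 := by
    have h := h1 1 (by norm_num)
    rw [F1] at h
    simpa using h
  have htwothird : F (2/3) = 1/2 := by
    have h := h2 0 (by norm_num)
    rw [F0] at h
    norm_num at h
    exact h
  have hInt : ∀ a b : ℝ, IntervalIntegrable F volume a b := fun a b =>
    mono.intervalIntegrable
  -- ∫_0^{1/3} F = I/6
  have hA : ∫ u in (0:ℝ)..(1/3:ℝ), F u = (∫ u in (0:ℝ)..1, F u) / 6 := by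
    have h := intervalIntegral.integral_comp_div (a := 0) (b := 1) (f := F)
      (c := 3) (by norm_num)
    have hL : (∫ x in (0:ℝ)..1, F (x/3)) = (∫ x in (0:ℝ)..1, F x) / 2 := by
      rw [intervalIntegral.integral_congr (g := fun x => F x / 2)
        (fun x hx => h1 x (by rwa [Set.uIcc_of_le (by norm_num : (0:ℝ) ≤ 1)] at hx)),
        intervalIntegral.integral_div]
    rw [hL] at h
    norm_num [smul_eq_mul] at h
    linarith
  -- ∫_{1/3}^{2/3} F = 1/6
  have hB : ∫ u in (1/3:ℝ)..(2/3:ℝ), F u = 1/6 := by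
    rw [intervalIntegral.integral_congr (g := fun _ => (1/2:ℝ))
      (fun u hu => by
        rw [Set.uIcc_of_le (by norm_num : (1/3:ℝ) ≤ 2/3)] at hu
        refine le_antisymm ?_ ?_
        · rw [← htwothird]; exact mono hu.2
        · rw [← hthird]; exact mono hu.1)]
    simp
    norm_num
  -- ∫_{2/3}^1 F = 1/6 + I/6
  have hC : ∫ u in (2/3:ℝ)..1, F u = 1/6 + (∫ u in (0:ℝ)..1, F u) / 6 := by
    have h := intervalIntegral.integral_comp_div_add (a := 0) (b := 1) (f := F)
      (c := 3) (by norm_num) (2/3)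
    have hL : (∫ x in (0:ℝ)..1, F (x/3 + 2/3)) = 1/2 + (∫ x in (0:ℝ)..1, F x) / 2 := by
      rw [intervalIntegral.integral_congr (g := fun x => 1/2 + F x / 2)
        (fun x hx => by
          rw [Set.uIcc_of_le (by norm_num : (0:ℝ) ≤ 1)] at hx
          have := h2 x hx
          rw [show (x + 2)/3 = x/3 + 2/3 by ring] at this
          exact this)]
      rw [intervalIntegral.integral_add intervalIntegrable_const
        ((hInt 0 1).div_const 2)]
      simp [intervalIntegral.integral_div]
    rw [hL] at h
    norm_num [smul_eq_mul] at h
    linarith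
  -- splitting
  have hs1 : (∫ u in (0:ℝ)..(1/3:ℝ), F u) + ∫ u in (1/3:ℝ)..(2/3:ℝ), F u
      = ∫ u in (0:ℝ)..(2/3:ℝ), F u :=
    intervalIntegral.integral_add_adjacent_intervals (hInt _ _) (hInt _ _)
  have hs2 : (∫ u in (0:ℝ)..(2/3:ℝ), F u) + ∫ u in (2/3:ℝ)..1, F u
      = ∫ u in (0:ℝ)..1, F u :=
    intervalIntegral.integral_add_adjacent_intervals (hInt _ _) (hInt _ _)
  have hI : (∫ u in (0:ℝ)..1, F u) = 1/2 := by
    set I := ∫ u in (0:ℝ)..1, F u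
    rw [hA, hB] at hs1
    rw [← hs1, hC] at hs2
    linarith
  have hs3 : (∫ u in (1/3:ℝ)..(2/3:ℝ), F u) + ∫ u in (2/3:ℝ)..1, F u
      = ∫ u in (1/3:ℝ)..1, F u :=
    intervalIntegral.integral_add_adjacent_intervals (hInt _ _) (hInt _ _)
  have hF13 : (∫ u in (1/3:ℝ)..1, F u) = 5/12 := by
    rw [← hs3, hB, hC, hI]; norm_num
  have hnum : (∫ u in (1/3:ℝ)..1, (1 - F u)) = 1/4 := by
    rw [intervalIntegral.integral_sub intervalIntegrable_const (hInt _ _), hF13]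
    simp
    norm_num
  rw [mrl, hnum, hthird]
  norm_num
end

section
/- For the Cantor distribution, m(x) = 5/6 - x for all x ∈ [1/3, 2/3], where m is the mean residual life function. -/
open MeasureTheory Set Filter

/-!
On the middle third F is the constant 1/2, so the numerator of m(x) is
(2/3 - x)/2 + ∫_{2/3}^1 (1 - F). Substituting u = (x+2)/3, resp. u = x/3, in the
self-similarity relations gives ∫_{2/3}^1 F = 1/6 + J/6 and ∫_0^{1/3} F = J/6 with
J = ∫_0^1 F; adding the middle third yields J = J/3 + 1/3, so J = 1/2, ∫_{2/3}^1 F = 1/4,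
and m(x) = 2 ((2/3 - x)/2 + 1/12) = 5/6 - x.
-/

namespace IsCantorCDF

variable {F : ℝ → ℝ}

theorem intervalIntegrable (hF : IsCantorCDF F) (a b : ℝ) : IntervalIntegrable F volume a b :=
  hF.1.intervalIntegrable

theorem eq_half_of_mem_Icc (hF : IsCantorCDF F) {y : ℝ} (hy : y ∈ Icc (1/3 : ℝ) (2/3)) :
    F y = 1/2 := by
  obtain ⟨hmono, h0, h1, hleft, hright⟩ := hF
  have h13 : F (1/3) = 1/2 := by simpa [h1] using hleft 1 (by norm_num)
  have h23 : F (2/3) = 1/2 := by simpa [h0] using hright 0 (by norm_num)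
  linarith [hmono hy.1, hmono hy.2]

theorem integral_eq_of_subset_middle (hF : IsCantorCDF F) {a b : ℝ} (ha : 1/3 ≤ a)
    (hab : a ≤ b) (hb : b ≤ 2/3) : ∫ u in a..b, F u = (b - a) / 2 := by
  rw [intervalIntegral.integral_congr (g := fun _ => (1/2 : ℝ)) fun u hu => ?_]
  · simp only [intervalIntegral.integral_const, smul_eq_mul]
    ring
  · rw [uIcc_of_le hab] at hu
    exact hF.eq_half_of_mem_Icc ⟨ha.trans hu.1, hu.2.trans hb⟩

theorem integral_zero_third (hF : IsCantorCDF F) :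
    ∫ u in (0:ℝ)..(1/3), F u = (∫ u in (0:ℝ)..1, F u) / 6 := by
  obtain ⟨-, -, -, hleft, -⟩ := hF
  have h := intervalIntegral.integral_comp_div F (a := 0) (b := 1) three_ne_zero
  rw [intervalIntegral.integral_congr fun x hx =>
      hleft x (by rwa [uIcc_of_le zero_le_one] at hx),
    intervalIntegral.integral_div] at h
  norm_num at h
  linarith

theorem integral_two_thirds_one (hF : IsCantorCDF F) :
    ∫ u in (2/3:ℝ)..1, F u = 1/6 + (∫ u in (0:ℝ)..1, F u) / 6 := by
  obtain ⟨hmono, -, -, -, hright⟩ := hF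
  have h := intervalIntegral.integral_comp_div_add F (a := 0) (b := 1) three_ne_zero (2/3)
  rw [intervalIntegral.integral_congr (g := fun x => 1/2 + F x / 2) fun x hx => by
      rw [uIcc_of_le zero_le_one] at hx
      rw [show x / 3 + 2 / 3 = (x + 2) / 3 by ring, hright x hx],
    intervalIntegral.integral_add intervalIntegrable_const
      (hmono.intervalIntegrable.div_const 2),
    intervalIntegral.integral_div] at h
  norm_num at h
  linarith

theorem integral_zero_one (hF : IsCantorCDF F) : ∫ u in (0:ℝ)..1, F u = 1/2 := by
  have hsplit := intervalIntegral.integral_add_adjacent_intervals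
    (hF.intervalIntegrable 0 (1/3)) (hF.intervalIntegrable (1/3) 1)
  rw [← intervalIntegral.integral_add_adjacent_intervals
      (hF.intervalIntegrable (1/3) (2/3)) (hF.intervalIntegrable (2/3) 1),
    hF.integral_zero_third, hF.integral_eq_of_subset_middle le_rfl (by norm_num) le_rfl,
    hF.integral_two_thirds_one] at hsplit
  linarith

end IsCantorCDF

/-- For the Cantor distribution, m(x) = 5/6 - x for all x ∈ [1/3, 2/3]. -/
theorem cantor_mrl_middle (F : ℝ → ℝ) (hF : IsCantorCDF F) :
    ∀ x ∈ Set.Icc (1/3 : ℝ) (2/3), mrl F x = 5/6 - x := by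
  intro x hx
  rw [mrl, intervalIntegral.integral_sub intervalIntegrable_const (hF.intervalIntegrable x 1),
    ← intervalIntegral.integral_add_adjacent_intervals
      (hF.intervalIntegrable x (2/3)) (hF.intervalIntegrable (2/3) 1),
    hF.integral_eq_of_subset_middle hx.1 hx.2 le_rfl, hF.integral_two_thirds_one,
    hF.integral_zero_one, hF.eq_half_of_mem_Icc hx]
  simp only [intervalIntegral.integral_const, smul_eq_mul]
  ring
end

section
/- The unique solution in [0,1] of the fixed point equation m(x) = x, where m is the mean residual life function of the Cantor distribution, is x* = 5/12. -/
open MeasureTheory Set Filter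

/-- The unique fixed point in [0,1] of the MRL function of the Cantor distribution
is x* = 5/12. -/
theorem cantor_mrl_fixed_point (F : ℝ → ℝ) (hF : IsCantorCDF F) :
    ∀ x ∈ Set.Icc (0:ℝ) 1, (mrl F x = x ↔ x = 5/12) := by
  obtain ⟨hmono, h0, h1, hrel1, hrel2⟩ := hF
  set g : ℝ → ℝ := fun u => 1 - F u with hgdef
  have hganti : Antitone g := fun a b h => sub_le_sub_left (hmono h) 1
  have hgint : ∀ a b : ℝ, IntervalIntegrable g volume a b := fun a b =>
    hganti.intervalIntegrable
  -- special values of F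
  have hF13 : F (1/3) = 1/2 := by
    have := hrel1 1 ⟨zero_le_one, le_refl 1⟩
    rw [h1] at this; linarith
  have hF23 : F (2/3) = 1/2 := by
    have := hrel2 0 ⟨le_refl 0, zero_le_one⟩
    rw [h0] at this; norm_num at this; linarith
  have hF29 : F (2/9) = 1/4 := by
    have := hrel1 (2/3) ⟨by norm_num, by norm_num⟩
    rw [hF23] at this; norm_num at this; linarith
  have hFhalf : ∀ y ∈ Icc (1/3:ℝ) (2/3), F y = 1/2 := by
    intro y hy
    have h1' : F y ≤ F (2/3) := hmono hy.2
    have h2' : F (1/3) ≤ F y := hmono hy.1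
    rw [hF13] at h2'; rw [hF23] at h1'; linarith
  -- J = ∫_0^1 g
  set J : ℝ := ∫ u in (0:ℝ)..1, g u with hJdef
  -- middle piece
  have hMid : (∫ u in (1/3:ℝ)..(2/3), g u) = 1/6 := by
    have : EqOn g (fun _ => (1/2:ℝ)) (uIcc (1/3:ℝ) (2/3)) := by
      intro y hy
      rw [Set.uIcc_of_le (by norm_num : (1/3:ℝ) ≤ 2/3)] at hy
      simp only [hgdef]
      rw [hFhalf y hy]; norm_num
    rw [intervalIntegral.integral_congr this, intervalIntegral.integral_const]
    norm_num
  -- tail piece via self-similarity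
  have hTail : (∫ u in (2/3:ℝ)..1, g u) = J / 6 := by
    have hsub := intervalIntegral.integral_comp_add_div g
      (by norm_num : (3:ℝ) ≠ 0) (2/3) (a := 0) (b := 1)
    have hb : (2/3 + (0:ℝ)/3) = 2/3 := by norm_num
    have hb' : (2/3 + (1:ℝ)/3) = 1 := by norm_num
    rw [hb, hb'] at hsub
    have hcongr : EqOn (fun x => g (2/3 + x/3)) (fun x => g x / 2) (uIcc (0:ℝ) 1) := by
      intro y hy
      rw [Set.uIcc_of_le (by norm_num : (0:ℝ) ≤ 1)] at hy
      have := hrel2 y hy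
      simp only [hgdef]
      have heq : (2/3 + y/3) = (y+2)/3 := by ring
      rw [heq, this]; ring
    rw [intervalIntegral.integral_congr hcongr, intervalIntegral.integral_div] at hsub
    rw [smul_eq_mul] at hsub
    rw [← hJdef] at hsub
    linarith
  -- left piece via self-similarity
  have hLeft : (∫ u in (0:ℝ)..(1/3), g u) = 1/6 + J / 6 := by
    have hsub := intervalIntegral.integral_comp_div g
      (by norm_num : (3:ℝ) ≠ 0) (a := 0) (b := 1)
    have hb : ((0:ℝ)/3) = 0 := by norm_num
    rw [hb] at hsub
    have hcongr : EqOn (fun x => g (x/3)) (fun x => 1/2 + g x / 2) (uIcc (0:ℝ) 1) := by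
      intro y hy
      rw [Set.uIcc_of_le (by norm_num : (0:ℝ) ≤ 1)] at hy
      have := hrel1 y hy
      simp only [hgdef]
      rw [this]; ring
    rw [intervalIntegral.integral_congr hcongr] at hsub
    rw [intervalIntegral.integral_add (intervalIntegrable_const)
      ((hgint 0 1).div_const 2), intervalIntegral.integral_const,
      intervalIntegral.integral_div, ← hJdef] at hsub
    simp only [smul_eq_mul] at hsub
    linarith
  -- J = 1/2
  have hJsplit : (∫ u in (0:ℝ)..(1/3), g u) + (∫ u in (1/3:ℝ)..(2/3), g u)
      + (∫ u in (2/3:ℝ)..1, g u) = J := by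
    rw [intervalIntegral.integral_add_adjacent_intervals (hgint 0 (1/3)) (hgint (1/3) (2/3)),
      intervalIntegral.integral_add_adjacent_intervals (hgint 0 (2/3)) (hgint (2/3) 1)]
  have hJ : J = 1/2 := by
    rw [hLeft, hMid, hTail] at hJsplit; linarith
  have hTail' : (∫ u in (2/3:ℝ)..1, g u) = 1/12 := by rw [hTail, hJ]; norm_num
  -- main argument
  intro x hx
  obtain ⟨hx0, hx1⟩ := hx
  have hFx0 : 0 ≤ F x := h0 ▸ hmono hx0
  have hFx1 : F x ≤ 1 := h1 ▸ hmono hx1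
  have hmrl : mrl F x = (∫ u in x..(1:ℝ), g u) / (1 - F x) := rfl
  rcases lt_or_ge x (1/3) with hlt | hge13
  · -- x < 1/3 : mrl F x > x
    have hFx12 : F x ≤ 1/2 := by
      have := hmono (le_of_lt hlt); rw [hF13] at this; exact this
    have hBpos : (0:ℝ) < 1 - F x := by linarith
    -- lower bound on the integral
    have hsplit : (∫ u in x..(2/3:ℝ), g u) + (∫ u in (2/3:ℝ)..1, g u)
        = ∫ u in x..(1:ℝ), g u :=
      intervalIntegral.integral_add_adjacent_intervals (hgint x (2/3)) (hgint (2/3) 1)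
    have hlow : (2/3 - x) * (1/2) ≤ ∫ u in x..(2/3:ℝ), g u := by
      have := intervalIntegral.integral_mono_on (by linarith : x ≤ 2/3)
        (intervalIntegrable_const (c := (1/2:ℝ))) (hgint x (2/3))
        (fun u hu => by
          have : F u ≤ F (2/3) := hmono hu.2
          rw [hF23] at this
          simp only [hgdef]; linarith)
      rwa [intervalIntegral.integral_const, smul_eq_mul] at this
    have hN : 5/12 - x/2 ≤ ∫ u in x..(1:ℝ), g u := by
      rw [← hsplit, hTail']; linarith
    have hkey : x * (1 - F x) < ∫ u in x..(1:ℝ), g u := by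
      rcases le_or_gt x (2/9) with hc | hc
      · nlinarith
      · have hq : F (2/9) ≤ F x := hmono (le_of_lt hc)
        rw [hF29] at hq
        nlinarith
    have hgt : x < mrl F x := by
      rw [hmrl, lt_div_iff₀ hBpos]; exact hkey
    constructor
    · intro h; exact absurd h (ne_of_gt hgt)
    · intro h; exfalso; rw [h] at hlt; norm_num at hlt
  · rcases le_or_gt x (2/3) with hle23 | hgt23
    · -- 1/3 ≤ x ≤ 2/3 : exact formula mrl F x = 5/6 - x
      have hFx : F x = 1/2 := hFhalf x ⟨hge13, hle23⟩
      have hsplit : (∫ u in x..(2/3:ℝ), g u) + (∫ u in (2/3:ℝ)..1, g u)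
          = ∫ u in x..(1:ℝ), g u :=
        intervalIntegral.integral_add_adjacent_intervals (hgint x (2/3)) (hgint (2/3) 1)
      have hconst : (∫ u in x..(2/3:ℝ), g u) = (2/3 - x) * (1/2) := by
        have hcongr : EqOn g (fun _ => (1/2:ℝ)) (uIcc x (2/3)) := by
          intro y hy
          rw [Set.uIcc_of_le hle23] at hy
          have hy' : y ∈ Icc (1/3:ℝ) (2/3) := ⟨le_trans hge13 hy.1, hy.2⟩
          simp only [hgdef]; rw [hFhalf y hy']; norm_num
        rw [intervalIntegral.integral_congr hcongr, intervalIntegral.integral_const,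
          smul_eq_mul]
      have hNval : (∫ u in x..(1:ℝ), g u) = (2/3 - x) * (1/2) + 1/12 := by
        rw [← hsplit, hconst, hTail']
      have hmval : mrl F x = 5/6 - x := by
        rw [hmrl, hNval, hFx]
        have : (1:ℝ) - 1/2 = 1/2 := by norm_num
        rw [this]
        field_simp
        ring
      rw [hmval]
      constructor
      · intro h; linarith
      · intro h; rw [h]; norm_num
    · -- 2/3 < x : mrl F x ≤ max 0 (1-x) < x
      have hBnn : (0:ℝ) ≤ 1 - F x := by linarith
      have hNle : (∫ u in x..(1:ℝ), g u) ≤ (1 - x) * (1 - F x) := by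
        have := intervalIntegral.integral_mono_on hx1 (hgint x 1)
          (intervalIntegrable_const (c := (1 - F x)))
          (fun u hu => by
            have : F x ≤ F u := hmono hu.1
            simp only [hgdef]; linarith)
        rwa [intervalIntegral.integral_const, smul_eq_mul] at this
      rcases eq_or_lt_of_le hBnn with hB0 | hBpos
      · -- F x = 1, numerator is 0, mrl = 0
        have hNnn : 0 ≤ ∫ u in x..(1:ℝ), g u := by
          apply intervalIntegral.integral_nonneg hx1
          intro u hu
          have : F u ≤ 1 := h1 ▸ hmono hu.2
          simp only [hgdef]; linarith
        have hN0 : (∫ u in x..(1:ℝ), g u) = 0 := by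
          have h' : (1 - x) * (1 - F x) = 0 := by rw [← hB0, mul_zero]
          linarith
        have hm0 : mrl F x = 0 := by rw [hmrl, hN0, zero_div]
        rw [hm0]
        constructor
        · intro h; exfalso; linarith
        · intro h; exfalso; rw [h] at hgt23; norm_num at hgt23
      · have hmle : mrl F x ≤ 1 - x := by
          rw [hmrl, div_le_iff₀ hBpos]; exact hNle
        constructor
        · intro h; exfalso; linarith
        · intro h; exfalso; rw [h] at hgt23; norm_num at hgt23
end

section
/- The mean residual life function m of the Cantor distribution satisfies m(x) > x for all x ∈ [0, 1/3]. -/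
open MeasureTheory Set Filter

/-- The MRL function of the Cantor distribution satisfies m(x) > x on [0, 1/3]. -/
theorem cantor_mrl_gt_left (F : ℝ → ℝ) (hF : IsCantorCDF F) :
    ∀ x ∈ Set.Icc (0:ℝ) (1/3), mrl F x > x := by
  obtain ⟨hmono, hF0, hF1, hrel1, hrel2⟩ := hF
  -- special values of F
  have h13 : F (1/3) = 1/2 := by
    have h := hrel1 1 ⟨by norm_num, le_refl 1⟩
    rw [hF1] at h; norm_num at h; linarith
  have h23 : F (2/3) = 1/2 := by
    have h := hrel2 0 ⟨le_refl 0, by norm_num⟩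
    rw [hF0] at h; norm_num at h; linarith
  have h19 : F (1/9) = 1/4 := by
    have h := hrel1 (1/3) ⟨by norm_num, by norm_num⟩
    norm_num at h; rw [h13] at h; linarith
  have h79 : F (7/9) = 3/4 := by
    have h := hrel2 (1/3) ⟨by norm_num, by norm_num⟩
    norm_num at h; rw [h13] at h; linarith
  have h727 : F (7/27) = 3/8 := by
    have h := hrel1 (7/9) ⟨by norm_num, by norm_num⟩
    norm_num at h; rw [h79] at h; linarith
  have h89 : F (8/9) = 3/4 := by
    have h := hrel2 (2/3) ⟨by norm_num, by norm_num⟩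
    norm_num at h; rw [h23] at h; linarith
  have h2627 : F (26/27) = 7/8 := by
    have h := hrel2 (8/9) ⟨by norm_num, by norm_num⟩
    norm_num at h; rw [h89] at h; linarith
  -- integrability
  have hanti : Antitone (fun u : ℝ => 1 - F u) := fun a b hab => by
    have := hmono hab; simp only; linarith
  have hInt : ∀ a b : ℝ, IntervalIntegrable (fun u => 1 - F u) volume a b := by
    intro a b
    exact hanti.intervalIntegrable
  -- segment lower bound
  have hseg : ∀ a b : ℝ, a ≤ b → (b - a) * (1 - F b) ≤ ∫ u in a..b, (1 - F u) := by
    intro a b hab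
    have h := intervalIntegral.integral_mono_on (μ := volume)
      (f := fun _ : ℝ => 1 - F b) (g := fun u : ℝ => 1 - F u) hab
      intervalIntegrable_const (hInt a b)
      (fun u hu => by have := hmono hu.2; linarith)
    rwa [intervalIntegral.integral_const, smul_eq_mul] at h
  intro x hx
  obtain ⟨hx0, hx3⟩ := hx
  have hFx0 : 0 ≤ F x := hF0 ▸ hmono hx0
  have hFx2 : F x ≤ 1/2 := h13 ▸ hmono hx3
  have hden : (0:ℝ) < 1 - F x := by linarith
  -- split the integral
  have hx23 : x ≤ 2/3 := by linarith
  have hsplit : (∫ u in x..(1:ℝ), (1 - F u)) =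
      (∫ u in x..(2/3:ℝ), (1 - F u)) + (∫ u in (2/3:ℝ)..(8/9:ℝ), (1 - F u)) +
      (∫ u in (8/9:ℝ)..(26/27:ℝ), (1 - F u)) + (∫ u in (26/27:ℝ)..(1:ℝ), (1 - F u)) := by
    have e1 := intervalIntegral.integral_add_adjacent_intervals (hInt x (2/3)) (hInt (2/3) 1)
    have e2 := intervalIntegral.integral_add_adjacent_intervals (hInt (2/3) (8/9)) (hInt (8/9) 1)
    have e3 := intervalIntegral.integral_add_adjacent_intervals (hInt (8/9) (26/27)) (hInt (26/27) 1)
    linarith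
  have hI1 : (2/3 - x) * (1 - F (2/3)) ≤ ∫ u in x..(2/3:ℝ), (1 - F u) := hseg x (2/3) hx23
  have hI2 : (8/9 - 2/3 : ℝ) * (1 - F (8/9)) ≤ ∫ u in (2/3:ℝ)..(8/9:ℝ), (1 - F u) :=
    hseg (2/3) (8/9) (by norm_num)
  have hI3 : (26/27 - 8/9 : ℝ) * (1 - F (26/27)) ≤ ∫ u in (8/9:ℝ)..(26/27:ℝ), (1 - F u) :=
    hseg (8/9) (26/27) (by norm_num)
  have hI4 : (1 - 26/27 : ℝ) * (1 - F 1) ≤ ∫ u in (26/27:ℝ)..(1:ℝ), (1 - F u) :=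
    hseg (26/27) 1 (by norm_num)
  rw [h23] at hI1; rw [h89] at hI2; rw [h2627] at hI3; rw [hF1] at hI4
  have hItotal : (2/3 - x) * (1/2) + 1/18 + 1/108 ≤ ∫ u in x..(1:ℝ), (1 - F u) := by
    rw [hsplit]; nlinarith
  -- conclude
  have key : x * (1 - F x) < ∫ u in x..(1:ℝ), (1 - F u) := by
    rcases le_or_gt x (1/9) with h | h
    · nlinarith [mul_nonneg hx0 hFx0]
    · rcases le_or_gt x (7/27) with h' | h'
      · have hFge : (1/4:ℝ) ≤ F x := h19 ▸ hmono h.le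
        nlinarith
      · have hFge : (3/8:ℝ) ≤ F x := h727 ▸ hmono h'.le
        nlinarith
  show x < mrl F x
  rw [mrl, lt_div_iff₀ hden]
  exact key
end

section
/- The mean residual life function m of the Cantor distribution satisfies m(x) < x for all x ∈ (2/3, 1]. -/
open MeasureTheory Set Filter

lemma cantor_pow (F : ℝ → ℝ) (hF : IsCantorCDF F) (n : ℕ) :
    F (1 - (1/3:ℝ)^n) = 1 - (1/2:ℝ)^n := by
  obtain ⟨hmono, h0, h1, hL, hR⟩ := hF
  induction n with
  | zero => simpa using h0
  | succ n ih =>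
      have hmem : (1 - (1/3:ℝ)^n) ∈ Set.Icc (0:ℝ) 1 := by
        constructor
        · have : (1/3:ℝ)^n ≤ 1 := pow_le_one₀ (by norm_num) (by norm_num)
          linarith
        · have : (0:ℝ) ≤ (1/3:ℝ)^n := by positivity
          linarith
      have := hR _ hmem
      have harg : ((1 - (1/3:ℝ)^n) + 2)/3 = 1 - (1/3:ℝ)^(n+1) := by ring
      rw [harg] at this
      rw [this, ih]; ring

lemma cantor_lt_one (F : ℝ → ℝ) (hF : IsCantorCDF F) {x : ℝ} (hx : x < 1) : F x < 1 := by
  obtain ⟨n, hn⟩ := exists_pow_lt_of_lt_one (by linarith : (0:ℝ) < 1 - x) (by norm_num : (1/3:ℝ) < 1)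
  have h1 : F x ≤ F (1 - (1/3:ℝ)^n) := hF.1 (by linarith)
  rw [cantor_pow F hF n] at h1
  have : (0:ℝ) < (1/2:ℝ)^n := by positivity
  linarith

/-- The MRL function of the Cantor distribution satisfies m(x) < x on (2/3, 1]. -/
theorem cantor_mrl_lt_right (F : ℝ → ℝ) (hF : IsCantorCDF F) :
    ∀ x ∈ Set.Ioc (2/3 : ℝ) 1, mrl F x < x := by
  rintro x ⟨hx1, hx2⟩
  rcases eq_or_lt_of_le hx2 with rfl | hx2
  · simp [mrl, hF.2.2.1]
  · have hFx : F x < 1 := cantor_lt_one F hF hx2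
    have hpos : 0 < 1 - F x := by linarith
    have hint : IntervalIntegrable (fun u => 1 - F u) volume x 1 := by
      have : Antitone (fun u => 1 - F u) := fun a b hab => by
        simp only [sub_le_sub_iff_left]; exact hF.1 hab
      exact this.intervalIntegrable
    have hbound : (∫ u in x..(1:ℝ), (1 - F u)) ≤ (1 - x) * (1 - F x) := by
      have h := intervalIntegral.integral_mono_on (le_of_lt hx2) hint
        (intervalIntegrable_const) (fun u hu => sub_le_sub_left (hF.1 hu.1) 1)
      rwa [intervalIntegral.integral_const, smul_eq_mul] at h
    rw [mrl, div_lt_iff₀ hpos]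
    have : (1 - x) * (1 - F x) < x * (1 - F x) := by nlinarith
    linarith
end
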